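/- Let I be a DG Poisson ideal of R, A = R/I, and A^e = F(R)/J with the maps m : A -> A^e, m(f + I) = f + J, and h : A -> A^e, h(f + I) = ψ(f) + J; write a for m(a) and y_i for the image of y_i in A^e. Then for every i in {1,...,n} and every homogeneous f in A, the following hold in A^e: (a) y_i f = (-1)^{|x_i||f|} f y_i + {x_i, f}; (b) h(f) x_i = (-1)^{|x_i||f|} x_i h(f) + {f, x_i}; (c) y_i h(f) = (-1)^{|x_i||f|} h(f) y_i + h({x_i, f}). -/

import Mathlib

noncomputable section

open scoped DirectSum

/-- The sign `(-1)^m`, as an integer, for `m : ℤ`. -/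
def sgn (m : ℤ) : ℤ := (Int.negOnePow m : ℤ)

/-- A differential graded Poisson algebra structure on a `ℤ`-graded `k`-algebra `A`,
whose grading is given by `𝒜`. -/
structure DGPoissonAlgebra (k : Type) [Field k] (A : Type) [Ring A] [Algebra k A]
    (𝒜 : ℤ → Submodule k A) : Type where
  /-- the Poisson bracket -/
  br : A →ₗ[k] A →ₗ[k] A
  /-- the differential -/
  d : A →ₗ[k] A
  br_mem : ∀ ⦃i j : ℤ⦄ ⦃a b : A⦄, a ∈ 𝒜 i → b ∈ 𝒜 j → br a b ∈ 𝒜 (i + j)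
  d_mem : ∀ ⦃i : ℤ⦄ ⦃a : A⦄, a ∈ 𝒜 i → d a ∈ 𝒜 (i + 1)
  antisymm : ∀ ⦃i j : ℤ⦄ ⦃a b : A⦄, a ∈ 𝒜 i → b ∈ 𝒜 j →
    br a b = -(sgn (i * j) • br b a)
  jacobi : ∀ ⦃i j l : ℤ⦄ ⦃a b c : A⦄, a ∈ 𝒜 i → b ∈ 𝒜 j → c ∈ 𝒜 l →
    br a (br b c) = br (br a b) c + sgn (i * j) • br b (br a c)
  gcomm : ∀ ⦃i j : ℤ⦄ ⦃a b : A⦄, a ∈ 𝒜 i → b ∈ 𝒜 j → a * b = sgn (i * j) • (b * a)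
  leibniz : ∀ ⦃i j l : ℤ⦄ ⦃a b c : A⦄, a ∈ 𝒜 i → b ∈ 𝒜 j → c ∈ 𝒜 l →
    br a (b * c) = br a b * c + sgn (i * j) • (b * br a c)
  d_sq : ∀ a : A, d (d a) = 0
  d_br : ∀ ⦃i j : ℤ⦄ ⦃a b : A⦄, a ∈ 𝒜 i → b ∈ 𝒜 j →
    d (br a b) = br (d a) b + sgn i • br a (d b)
  d_mul : ∀ ⦃i j : ℤ⦄ ⦃a b : A⦄, a ∈ 𝒜 i → b ∈ 𝒜 j →
    d (a * b) = d a * b + sgn i • (a * d b)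

/-- A differential graded algebra structure (i.e. a differential) on a `ℤ`-graded
`k`-algebra `B` with grading `ℬ`. -/
structure DGAlgebra (k : Type) [Field k] (B : Type) [Ring B] [Algebra k B]
    (ℬ : ℤ → Submodule k B) : Type where
  /-- the differential -/
  d : B →ₗ[k] B
  d_mem : ∀ ⦃i : ℤ⦄ ⦃b : B⦄, b ∈ ℬ i → d b ∈ ℬ (i + 1)
  d_sq : ∀ b : B, d (d b) = 0
  d_mul : ∀ ⦃i j : ℤ⦄ ⦃a b : B⦄, a ∈ ℬ i → b ∈ ℬ j →
    d (a * b) = d a * b + sgn i • (a * d b)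

/-- `f` is a DG algebra map: a degree-`0` algebra map commuting with the differentials. -/
structure IsDGAlgebraMap (k : Type) [Field k] {A B : Type} [Ring A] [Algebra k A]
    [Ring B] [Algebra k B] (𝒜 : ℤ → Submodule k A) (ℬ : ℤ → Submodule k B)
    (dA : A →ₗ[k] A) (dB : B →ₗ[k] B) (f : A →ₐ[k] B) : Prop where
  map_mem : ∀ ⦃i : ℤ⦄ ⦃a : A⦄, a ∈ 𝒜 i → f a ∈ ℬ i
  map_d : ∀ a : A, f (dA a) = dB (f a)

/-- The compatibility conditions satisfied by a pair `(f, g)` from a DG Poisson algebra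
`A` to a DG algebra `B`: `f` is a DG algebra map, `g` is a degree-`0` `k`-linear map
commuting with the differentials which is a graded Lie algebra map into `B` with the
graded commutator, and the two mixed identities hold. -/
def UEACompat (k : Type) [Field k] {A B : Type} [Ring A] [Algebra k A]
    [Ring B] [Algebra k B] (𝒜 : ℤ → Submodule k A) (ℬ : ℤ → Submodule k B)
    (P : DGPoissonAlgebra k A 𝒜) (dB : B →ₗ[k] B)
    (f : A →ₐ[k] B) (g : A →ₗ[k] B) : Prop :=
  IsDGAlgebraMap k 𝒜 ℬ P.d dB f ∧
  (∀ ⦃i : ℤ⦄ ⦃a : A⦄, a ∈ 𝒜 i → g a ∈ ℬ i) ∧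
  (∀ a : A, g (P.d a) = dB (g a)) ∧
  (∀ ⦃i j : ℤ⦄ ⦃a b : A⦄, a ∈ 𝒜 i → b ∈ 𝒜 j →
    g (P.br a b) = g a * g b - sgn (i * j) • (g b * g a)) ∧
  (∀ ⦃i j : ℤ⦄ ⦃a b : A⦄, a ∈ 𝒜 i → b ∈ 𝒜 j →
    f (P.br a b) = g a * f b - sgn (i * j) • (f b * g a)) ∧
  (∀ ⦃i j : ℤ⦄ ⦃a b : A⦄, a ∈ 𝒜 i → b ∈ 𝒜 j →
    g (a * b) = f a * g b + sgn (i * j) • (f b * g a))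

/-- `(E, α, β)` is a universal enveloping algebra of the DG Poisson algebra `A`. -/
def IsUEA (k : Type) [Field k] {A E : Type} [Ring A] [Algebra k A] [Ring E] [Algebra k E]
    (𝒜 : ℤ → Submodule k A) (ℰ : ℤ → Submodule k E)
    (P : DGPoissonAlgebra k A 𝒜) (DE : DGAlgebra k E ℰ)
    (α : A →ₐ[k] E) (β : A →ₗ[k] E) : Prop :=
  UEACompat k 𝒜 ℰ P DE.d α β ∧
  ∀ (D : Type) [Ring D] [Algebra k D] (𝒟 : ℤ → Submodule k D) [GradedAlgebra 𝒟]
    (dD : DGAlgebra k D 𝒟) (f : A →ₐ[k] D) (g : A →ₗ[k] D),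
    UEACompat k 𝒜 𝒟 P dD.d f g →
    ∃! φ : E →ₐ[k] D, IsDGAlgebraMap k ℰ 𝒟 DE.d dD.d φ ∧
      φ.comp α = f ∧ φ.toLinearMap.comp β = g

/-- The two-sided ideal of `F` generated by a set `S`, as a `k`-submodule. -/
def idealGen (k : Type) [Field k] {F : Type} [Ring F] [Algebra k F] (S : Set F) :
    Submodule k F :=
  Submodule.span k {z : F | ∃ u v : F, ∃ s ∈ S, z = u * s * v}

/-- The left ideal of `F` generated by a set `S`, as a `k`-submodule. -/
def leftIdealGen (k : Type) [Field k] {F : Type} [Ring F] [Algebra k F] (S : Set F) :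
    Submodule k F :=
  Submodule.span k {z : F | ∃ u : F, ∃ s ∈ S, z = u * s}

/-- A submodule is graded if it is spanned by its homogeneous elements. -/
def IsGradedSubmodule (k : Type) [Field k] {A : Type} [AddCommGroup A] [Module k A]
    (𝒜 : ℤ → Submodule k A) (M : Submodule k A) : Prop :=
  M ≤ Submodule.span k {a : A | a ∈ M ∧ ∃ i, a ∈ 𝒜 i}

/-- A `k`-submodule which is a two-sided ideal. -/
def IsTwoSidedIdealSub (k : Type) [Field k] {A : Type} [Ring A] [Algebra k A]
    (M : Submodule k A) : Prop :=
  ∀ r : A, ∀ m ∈ M, r * m ∈ M ∧ m * r ∈ M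

/-- A DG ideal: a graded two-sided ideal closed under the differential `d`. -/
def IsDGIdeal (k : Type) [Field k] {A : Type} [Ring A] [Algebra k A]
    (𝒜 : ℤ → Submodule k A) (d : A →ₗ[k] A) (M : Submodule k A) : Prop :=
  IsTwoSidedIdealSub k M ∧ IsGradedSubmodule k 𝒜 M ∧ ∀ m ∈ M, d m ∈ M

/-- A DG Poisson ideal: a DG ideal which is also closed under the Poisson bracket. -/
def IsDGPoissonIdeal (k : Type) [Field k] {A : Type} [Ring A] [Algebra k A]
    (𝒜 : ℤ → Submodule k A) (P : DGPoissonAlgebra k A 𝒜) (M : Submodule k A) : Prop :=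
  IsDGIdeal k 𝒜 P.d M ∧ ∀ a : A, ∀ m ∈ M, P.br a m ∈ M

/-- `π : A → B` presents `B` as the quotient of `A` by `I`. -/
structure IsQuotientBy (k : Type) [Field k] {A B : Type} [Ring A] [Algebra k A]
    [Ring B] [Algebra k B] (π : A →ₐ[k] B) (I : Submodule k A) : Prop where
  surj : Function.Surjective π
  ker : ∀ a : A, π a = 0 ↔ a ∈ I

/-- The (noncommutative, ordered) monomial `x 0 ^ e 0 * x 1 ^ e 1 * ⋯` . -/
def xMono {n : ℕ} {R : Type} [Ring R] (x : Fin n → R) (e : Fin n → ℕ) : R :=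
  ((List.finRange n).map fun r => x r ^ e r).prod
/-- The map `ψ : R → F(R)`, `ψ(f) = ∑_α ψ_α(f) y_α`. -/
def psiF {k R F : Type} [Field k] [Ring R] [Algebra k R] [Ring F] [Algebra k F]
    {Λ : Type} (ι : R →ₐ[k] F) (ψ : Λ → R →ₗ[k] R) (y : Λ → F) (f : R) : F :=
  ∑ᶠ α : Λ, ι (ψ α f) * y α

/-- The generators of the graded ideal `J` of `F(R)`: `I`, `ψ(I)`,
`y_i y_j - (-1)^{|x_i||x_j|} y_j y_i - ψ({x_i, x_j})` and
`y_i x_j - (-1)^{|x_i||x_j|} x_j y_i - {x_i, x_j}`. -/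
def Jgens {k R F : Type} [Field k] [Ring R] [Algebra k R] [Ring F] [Algebra k F]
    {Λ : Type} (𝒜 : ℤ → Submodule k R) (P : DGPoissonAlgebra k R 𝒜)
    (x : Λ → R) (w : Λ → ℤ) (ι : R →ₐ[k] F) (ψ : Λ → R →ₗ[k] R) (y : Λ → F)
    (I : Submodule k R) : Set F :=
  (⇑ι '' (I : Set R)) ∪ (psiF ι ψ y '' (I : Set R)) ∪
  {z | ∃ α β, z = y α * y β - sgn (w α * w β) • (y β * y α)
      - psiF ι ψ y (P.br (x α) (x β))} ∪
  {z | ∃ α β, z = y α * ι (x β) - sgn (w α * w β) • (ι (x β) * y α)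
      - ι (P.br (x α) (x β))}


/-!
All three identities are linear in `f`, and lifting `f` to a homogeneous element of `R` reduces
them to identities in `F(R)/J` for homogeneous `r ∈ R`. There they hold in any algebra receiving
`R` in which the images `Y_i` of the `y_i` satisfy the two families of commutation relations of
`J`. Since `R` is spanned by monomials in the `x_i`, an induction on monomials from the left
suffices: the case `r = 1` is trivial, and the passage from `m` to `x_j m` uses the Leibniz rule of
the bracket, the twisted Leibniz rule of `ψ` (so `ψ(x_j m) = x_j ψ(m) ± m y_j`), the relations of
`J` for the new generator and, for (b), graded commutativity of `R`. Proving (a) first makes it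
available in the induction step of (c).
-/

@[simp]
lemma sgn_zero : sgn 0 = 1 := rfl

lemma sgn_add (m m' : ℤ) : sgn (m + m') = sgn m * sgn m' := by
  simp [sgn, Int.negOnePow_add]

lemma sgn_eq_sgn_of_even_sub {m m' : ℤ} (h : Even (m - m')) : sgn m = sgn m' :=
  congrArg Units.val ((Int.negOnePow_eq_iff m m').2 h)

section Graded

variable {k R : Type} [Field k] [Ring R] [Algebra k R] {𝒜 : ℤ → Submodule k R}
  [GradedAlgebra 𝒜]

lemma exists_mem_graded_map_eq {A : Type} [Ring A] [Algebra k A] {ℬ : ℤ → Submodule k A}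
    [GradedAlgebra ℬ] {π : R →ₐ[k] A} (hsurj : Function.Surjective π)
    (hmem : ∀ ⦃i : ℤ⦄ ⦃a : R⦄, a ∈ 𝒜 i → π a ∈ ℬ i) {l : ℤ} {f : A} (hf : f ∈ ℬ l) :
    ∃ r ∈ 𝒜 l, π r = f := by
  obtain ⟨r, rfl⟩ := hsurj f
  let πg : 𝒜 →ₐᵍ[k] ℬ := ⟨π, fun h => hmem h⟩
  refine ⟨DirectSum.decompose 𝒜 r l, SetLike.coe_mem _, ?_⟩
  rw [show π _ = πg _ from rfl, map_directSumDecompose 𝒜 ℬ πg]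
  exact DirectSum.decompose_of_mem_same ℬ hf

variable {Λ : Type} {x : Λ → R} {w : Λ → ℤ}

theorem le_of_one_mem_of_gen_mul_mem (hx : ∀ a, x a ∈ 𝒜 (w a))
    (hgen : Algebra.adjoin k (Set.range x) = ⊤) (S : ℤ → Submodule k R) (one : 1 ∈ S 0)
    (gen_mul : ∀ a q m, m ∈ 𝒜 q → m ∈ S q → x a * m ∈ S (w a + q)) (l : ℤ) :
    𝒜 l ≤ S l := by
  have hmonomial : ∀ m ∈ Submonoid.closure (Set.range x), ∃ q, m ∈ 𝒜 q ∧ m ∈ S q := by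
    intro m hm
    induction hm using Submonoid.closure_induction_left with
    | one => exact ⟨0, SetLike.one_mem_graded 𝒜, one⟩
    | mul_left _ ha m _ ih =>
      obtain ⟨a, rfl⟩ := ha
      obtain ⟨q, hmq, hmS⟩ := ih
      exact ⟨w a + q, SetLike.mul_mem_graded (hx a) hmq, gen_mul a q m hmq hmS⟩
  have hspan : Submodule.span k (Submonoid.closure (Set.range x)) ≤
      (S l).comap (GradedAlgebra.proj 𝒜 l) := by
    refine Submodule.span_le.2 fun m hm => ?_
    obtain ⟨q, hmq, hmS⟩ := hmonomial m hm
    by_cases hql : q = l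
    · subst hql
      simpa [GradedAlgebra.proj_apply, DirectSum.decompose_of_mem_same 𝒜 hmq] using hmS
    · simp [GradedAlgebra.proj_apply, DirectSum.decompose_of_mem_ne 𝒜 hmq hql]
  intro r hr
  have hr' : r ∈ Submodule.span k (Submonoid.closure (Set.range x)) := by
    rw [← Algebra.adjoin_eq_span, hgen]
    trivial
  simpa [GradedAlgebra.proj_apply, DirectSum.decompose_of_mem_same 𝒜 hr] using hspan hr'

theorem graded_comm_of_gen_mul {M : Type} [AddCommGroup M] [Module k M]
    (hx : ∀ a, x a ∈ 𝒜 (w a)) (hgen : Algebra.adjoin k (Set.range x) = ⊤) (e : ℤ)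
    (L G H : R →ₗ[k] M) (one : L 1 = G 1 + H 1)
    (gen_mul : ∀ a q m, m ∈ 𝒜 q → L m = sgn (e * q) • G m + H m →
      L (x a * m) = sgn (e * (w a + q)) • G (x a * m) + H (x a * m))
    {l : ℤ} {r : R} (hr : r ∈ 𝒜 l) : L r = sgn (e * l) • G r + H r :=
  le_of_one_mem_of_gen_mul_mem hx hgen (fun l => LinearMap.eqLocus L (sgn (e * l) • G + H))
    (by simpa using one) gen_mul l hr

end Graded

section Bracket

variable {k R : Type} [Field k] [Ring R] [Algebra k R] {𝒜 : ℤ → Submodule k R}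

lemma DGPoissonAlgebra.map_mul_comm (P : DGPoissonAlgebra k R 𝒜) {C : Type} [Ring C]
    [Algebra k C] (μ : R →ₐ[k] C) {p q : ℤ} {a b : R} (ha : a ∈ 𝒜 p) (hb : b ∈ 𝒜 q) :
    μ a * μ b = sgn (p * q) • (μ b * μ a) := by
  rw [← map_mul, ← map_mul, P.gcomm ha hb, map_zsmul]

variable (P : DGPoissonAlgebra k R 𝒜)

lemma DGPoissonAlgebra.br_one [SetLike.GradedOne 𝒜] {p : ℤ} {a : R} (ha : a ∈ 𝒜 p) :
    P.br a 1 = 0 := by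
  simpa using P.leibniz ha (SetLike.one_mem_graded 𝒜) (SetLike.one_mem_graded 𝒜)

lemma DGPoissonAlgebra.one_br [SetLike.GradedOne 𝒜] {p : ℤ} {a : R} (ha : a ∈ 𝒜 p) :
    P.br 1 a = 0 := by
  simp [P.antisymm (SetLike.one_mem_graded 𝒜) ha, P.br_one ha]

lemma DGPoissonAlgebra.mul_br [SetLike.GradedMul 𝒜] {p q s : ℤ} {a b c : R} (ha : a ∈ 𝒜 p)
    (hb : b ∈ 𝒜 q) (hc : c ∈ 𝒜 s) :
    P.br (a * b) c = sgn (q * s) • (P.br a c * b) + a * P.br b c := by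
  rw [P.antisymm (SetLike.mul_mem_graded ha hb) hc, P.leibniz hc ha hb,
    P.antisymm hc ha, P.antisymm hc hb]
  simp only [neg_mul, mul_neg, smul_neg, neg_neg, smul_add, neg_add_rev, smul_mul_assoc,
    mul_smul_comm, smul_smul, ← sgn_add]
  rw [sgn_eq_sgn_of_even_sub (m := (p + q) * s + (s * p + s * q)) (m' := 0)
      ⟨p * s + q * s, by ring⟩,
    sgn_eq_sgn_of_even_sub (m := (p + q) * s + s * p) (m' := q * s) ⟨p * s, by ring⟩,
    sgn_zero, one_smul, add_comm]

end Bracket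

section Psi

def IsAntiDifferential {k R : Type} [Field k] [Ring R] [Algebra k R] (𝒜 : ℤ → Submodule k R)
    (φ : R →ₗ[k] R) : Prop :=
  ∀ ⦃i j : ℤ⦄ ⦃a b : R⦄, a ∈ 𝒜 i → b ∈ 𝒜 j → φ (a * b) = a * φ b + sgn (i * j) • (b * φ a)

variable {k R C Λ : Type} [Field k] [Ring R] [Algebra k R] [Ring C] [Algebra k C]
  {𝒜 : ℤ → Submodule k R} (μ : R →ₐ[k] C) (ψ : Λ → R →ₗ[k] R) (Y : Λ → C)

def psiLinear [Fintype Λ] : R →ₗ[k] C :=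
  ∑ α, LinearMap.mulRight k (Y α) ∘ₗ μ.toLinearMap ∘ₗ ψ α

lemma psiLinear_apply [Fintype Λ] (r : R) : psiLinear μ ψ Y r = psiF μ ψ Y r := by
  simp [psiLinear, psiF, finsum_eq_sum_of_fintype]

lemma psiF_add [Fintype Λ] (a b : R) :
    psiF μ ψ Y (a + b) = psiF μ ψ Y a + psiF μ ψ Y b := by
  simp only [← psiLinear_apply, map_add]

lemma psiF_zsmul [Fintype Λ] (z : ℤ) (a : R) : psiF μ ψ Y (z • a) = z • psiF μ ψ Y a := by
  simp only [← psiLinear_apply, map_zsmul]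

lemma psiF_gen {x : Λ → R} (hψx : ∀ a, ψ a (x a) = 1) (hψx' : ∀ a b, a ≠ b → ψ a (x b) = 0)
    (a : Λ) : psiF μ ψ Y (x a) = Y a := by
  rw [psiF, finsum_eq_single _ a fun b hb => by simp [hψx' b a hb], hψx, map_one, one_mul]

variable {μ ψ Y}

lemma psiF_mul [Fintype Λ] (hψmul : ∀ r, IsAntiDifferential 𝒜 (ψ r)) {p q : ℤ} {a b : R}
    (ha : a ∈ 𝒜 p) (hb : b ∈ 𝒜 q) :
    psiF μ ψ Y (a * b) = μ a * psiF μ ψ Y b + sgn (p * q) • (μ b * psiF μ ψ Y a) := by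
  simp only [psiF, finsum_eq_sum_of_fintype, hψmul _ ha hb, Finset.mul_sum, Finset.smul_sum,
    ← Finset.sum_add_distrib, map_add, map_mul, map_zsmul, add_mul, smul_mul_assoc, mul_assoc]

lemma psiF_one [Fintype Λ] [SetLike.GradedOne 𝒜] (hψmul : ∀ r, IsAntiDifferential 𝒜 (ψ r)) :
    psiF μ ψ Y 1 = 0 := by
  simpa using psiF_mul (μ := μ) (Y := Y) hψmul (SetLike.one_mem_graded 𝒜)
    (SetLike.one_mem_graded 𝒜)

lemma psiF_gen_mul [Fintype Λ] {x : Λ → R} {w : Λ → ℤ} (hx : ∀ a, x a ∈ 𝒜 (w a))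
    (hψx : ∀ a, ψ a (x a) = 1) (hψx' : ∀ a b, a ≠ b → ψ a (x b) = 0)
    (hψmul : ∀ r, IsAntiDifferential 𝒜 (ψ r)) (a : Λ) {q : ℤ} {m : R} (hm : m ∈ 𝒜 q) :
    psiF μ ψ Y (x a * m) = μ (x a) * psiF μ ψ Y m + sgn (w a * q) • (μ m * Y a) := by
  rw [psiF_mul hψmul (hx a) hm, psiF_gen μ ψ Y hψx hψx']

end Psi

section Commutation

variable {k R C Λ : Type} [Field k] [Ring R] [Algebra k R] [Ring C] [Algebra k C]
  {𝒜 : ℤ → Submodule k R} [GradedAlgebra 𝒜] (P : DGPoissonAlgebra k R 𝒜)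
  {x : Λ → R} {w : Λ → ℤ} {μ : R →ₐ[k] C} {Y : Λ → C} {ψ : Λ → R →ₗ[k] R}

theorem y_mul_map_eq (hx : ∀ a, x a ∈ 𝒜 (w a)) (hgen : Algebra.adjoin k (Set.range x) = ⊤)
    (hYx : ∀ a b, Y a * μ (x b) = sgn (w a * w b) • (μ (x b) * Y a) + μ (P.br (x a) (x b)))
    (a : Λ) {l : ℤ} {r : R} (hr : r ∈ 𝒜 l) :
    Y a * μ r = sgn (w a * l) • (μ r * Y a) + μ (P.br (x a) r) := by
  refine graded_comm_of_gen_mul hx hgen (w a) (LinearMap.mulLeft k (Y a) ∘ₗ μ.toLinearMap)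
    (LinearMap.mulRight k (Y a) ∘ₗ μ.toLinearMap) (μ.toLinearMap ∘ₗ P.br (x a)) ?_ ?_ hr
  · simp [P.br_one (hx a)]
  intro b q m hm ih
  simp only [LinearMap.comp_apply, AlgHom.toLinearMap_apply, LinearMap.mulLeft_apply,
    LinearMap.mulRight_apply] at ih ⊢
  calc Y a * μ (x b * m)
      = (sgn (w a * w b) • (μ (x b) * Y a) + μ (P.br (x a) (x b))) * μ m := by
        rw [map_mul, ← mul_assoc, hYx]
    _ = sgn (w a * w b) • (μ (x b) * (sgn (w a * q) • (μ m * Y a) + μ (P.br (x a) m)))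
          + μ (P.br (x a) (x b)) * μ m := by
        rw [← ih, add_mul, smul_mul_assoc, mul_assoc]
    _ = sgn (w a * (w b + q)) • (μ (x b * m) * Y a) + μ (P.br (x a) (x b * m)) := by
        rw [P.leibniz (hx a) (hx b) hm, mul_add (w a), sgn_add]
        simp only [map_add, map_mul, map_zsmul, mul_add, smul_add, mul_smul_comm, smul_smul,
          mul_assoc]
        abel

theorem psiF_mul_map_x_eq [Fintype Λ] (hx : ∀ a, x a ∈ 𝒜 (w a))
    (hgen : Algebra.adjoin k (Set.range x) = ⊤)
    (hψx : ∀ a, ψ a (x a) = 1) (hψx' : ∀ a b, a ≠ b → ψ a (x b) = 0)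
    (hψmul : ∀ r, IsAntiDifferential 𝒜 (ψ r))
    (hYx : ∀ a b, Y a * μ (x b) = sgn (w a * w b) • (μ (x b) * Y a) + μ (P.br (x a) (x b)))
    (a : Λ) {l : ℤ} {r : R} (hr : r ∈ 𝒜 l) :
    psiF μ ψ Y r * μ (x a) = sgn (w a * l) • (μ (x a) * psiF μ ψ Y r) + μ (P.br r (x a)) := by
  simp only [← psiLinear_apply]
  refine graded_comm_of_gen_mul hx hgen (w a)
    (LinearMap.mulRight k (μ (x a)) ∘ₗ psiLinear μ ψ Y)
    (LinearMap.mulLeft k (μ (x a)) ∘ₗ psiLinear μ ψ Y) (μ.toLinearMap ∘ₗ P.br.flip (x a))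
    ?_ ?_ hr
  · simp [psiLinear_apply, psiF_one hψmul, P.one_br (hx a)]
  intro b q m hm ih
  simp only [LinearMap.comp_apply, AlgHom.toLinearMap_apply, LinearMap.mulLeft_apply,
    LinearMap.mulRight_apply, LinearMap.flip_apply, psiLinear_apply] at ih ⊢
  have hxm := psiF_gen_mul (μ := μ) (Y := Y) hx hψx hψx' hψmul b hm
  calc psiF μ ψ Y (x b * m) * μ (x a)
      = μ (x b) * (psiF μ ψ Y m * μ (x a)) + sgn (w b * q) • (μ m * (Y b * μ (x a))) := by
        rw [hxm, add_mul, smul_mul_assoc, mul_assoc, mul_assoc]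
    _ = μ (x b) * (sgn (w a * q) • (μ (x a) * psiF μ ψ Y m) + μ (P.br m (x a)))
          + sgn (w b * q) • (μ m * (sgn (w b * w a) • (μ (x a) * Y b)
            + μ (P.br (x b) (x a)))) := by
        rw [ih, hYx]
    _ = sgn (w a * (w b + q)) • (μ (x a) * psiF μ ψ Y (x b * m))
          + μ (P.br (x b * m) (x a)) := by
        rw [P.mul_br (hx b) hm (hx a), hxm]
        simp only [map_add, map_mul, map_zsmul, mul_add, smul_add, mul_smul_comm, smul_mul_assoc,
          smul_smul, ← mul_assoc, P.map_mul_comm μ (hx b) (hx a), P.map_mul_comm μ hm (hx a),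
          P.map_mul_comm μ hm (P.br_mem (hx b) (hx a)), ← sgn_add]
        rw [sgn_eq_sgn_of_even_sub (m := w a * q + w b * w a) (m' := w a * w b + w a * q)
            ⟨0, by ring⟩,
          sgn_eq_sgn_of_even_sub (m := w b * q + (w b * w a + q * w a))
            (m' := w a * w b + w a * q + w b * q) ⟨0, by ring⟩,
          sgn_eq_sgn_of_even_sub (m := w b * q + (q * w b + q * w a)) (m' := q * w a)
            ⟨w b * q, by ring⟩]
        abel

theorem y_mul_psiF_eq [Fintype Λ] (hx : ∀ a, x a ∈ 𝒜 (w a))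
    (hgen : Algebra.adjoin k (Set.range x) = ⊤)
    (hψx : ∀ a, ψ a (x a) = 1) (hψx' : ∀ a b, a ≠ b → ψ a (x b) = 0)
    (hψmul : ∀ r, IsAntiDifferential 𝒜 (ψ r))
    (hYx : ∀ a b, Y a * μ (x b) = sgn (w a * w b) • (μ (x b) * Y a) + μ (P.br (x a) (x b)))
    (hYY : ∀ a b, Y a * Y b = sgn (w a * w b) • (Y b * Y a) + psiF μ ψ Y (P.br (x a) (x b)))
    (a : Λ) {l : ℤ} {r : R} (hr : r ∈ 𝒜 l) :
    Y a * psiF μ ψ Y r = sgn (w a * l) • (psiF μ ψ Y r * Y a) + psiF μ ψ Y (P.br (x a) r) := by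
  simp only [← psiLinear_apply]
  refine graded_comm_of_gen_mul hx hgen (w a) (LinearMap.mulLeft k (Y a) ∘ₗ psiLinear μ ψ Y)
    (LinearMap.mulRight k (Y a) ∘ₗ psiLinear μ ψ Y) (psiLinear μ ψ Y ∘ₗ P.br (x a)) ?_ ?_ hr
  · simp only [LinearMap.comp_apply, P.br_one (hx a), map_zero, psiLinear_apply,
      psiF_one hψmul]
    simp
  intro b q m hm ih
  simp only [LinearMap.comp_apply, LinearMap.mulLeft_apply, LinearMap.mulRight_apply,
    psiLinear_apply] at ih ⊢
  have hxm := psiF_gen_mul (μ := μ) (Y := Y) hx hψx hψx' hψmul b hm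
  calc Y a * psiF μ ψ Y (x b * m)
      = (Y a * μ (x b)) * psiF μ ψ Y m + sgn (w b * q) • ((Y a * μ m) * Y b) := by
        rw [hxm, mul_add, mul_smul_comm, mul_assoc, mul_assoc]
    _ = sgn (w a * w b) • (μ (x b) * (Y a * psiF μ ψ Y m)) + μ (P.br (x a) (x b)) * psiF μ ψ Y m
          + sgn (w b * q) • (sgn (w a * q) • (μ m * (Y a * Y b)) + μ (P.br (x a) m) * Y b) := by
        rw [hYx, y_mul_map_eq P hx hgen hYx a hm]
        simp only [add_mul, smul_mul_assoc, mul_assoc]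
    _ = sgn (w a * w b) • (μ (x b) * (sgn (w a * q) • (psiF μ ψ Y m * Y a)
            + psiF μ ψ Y (P.br (x a) m))) + μ (P.br (x a) (x b)) * psiF μ ψ Y m
          + sgn (w b * q) • (sgn (w a * q) • (μ m * (sgn (w a * w b) • (Y b * Y a)
            + psiF μ ψ Y (P.br (x a) (x b)))) + μ (P.br (x a) m) * Y b) := by
        rw [ih, hYY]
    _ = sgn (w a * (w b + q)) • (psiF μ ψ Y (x b * m) * Y a)
          + psiF μ ψ Y (P.br (x a) (x b * m)) := by
        rw [P.leibniz (hx a) (hx b) hm, psiF_add, psiF_zsmul,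
          psiF_mul hψmul (P.br_mem (hx a) (hx b)) hm,
          psiF_gen_mul hx hψx hψx' hψmul b (P.br_mem (hx a) hm), hxm]
        simp only [mul_add, add_mul, smul_add, mul_smul_comm, smul_mul_assoc, smul_smul,
          ← sgn_add, mul_assoc]
        rw [sgn_eq_sgn_of_even_sub (m := w b * q + (w a * q + w a * w b))
            (m' := w a * w b + w a * q + w b * q) ⟨0, by ring⟩,
          sgn_eq_sgn_of_even_sub (m := w b * q + w a * q) (m' := w a * q + w b * q) ⟨0, by ring⟩,
          sgn_eq_sgn_of_even_sub (m := w a * w b + (w b * w a + w b * q)) (m' := w b * q)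
            ⟨w a * w b, by ring⟩]
        abel

end Commutation

lemma IsQuotientBy.map_eq_zero_of_mem {k F C : Type} [Field k] [Ring F] [Algebra k F] [Ring C]
    [Algebra k C] {π : F →ₐ[k] C} {S : Set F} (hπ : IsQuotientBy k π (idealGen k S)) {u : F}
    (hu : u ∈ S) : π u = 0 :=
  (hπ.ker u).2 (Submodule.subset_span ⟨1, 1, u, hu, by rw [one_mul, mul_one]⟩)

section Envelope

variable {k R F C Λ : Type} [Field k] [Ring R] [Algebra k R] [Ring F] [Algebra k F] [Ring C]
  [Algebra k C] {𝒜 : ℤ → Submodule k R} (P : DGPoissonAlgebra k R 𝒜) {x : Λ → R} {w : Λ → ℤ}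
  {ι : R →ₐ[k] F} {ψ : Λ → R →ₗ[k] R} {y : Λ → F} {I : Submodule k R} {πe : F →ₐ[k] C}

lemma map_psiF [Fintype Λ] (r : R) :
    πe (psiF ι ψ y r) = psiF (πe.comp ι) ψ (πe ∘ y) r := by
  simp [psiF, finsum_eq_sum_of_fintype]

lemma comp_y_mul_comp_x (hπe : IsQuotientBy k πe (idealGen k (Jgens 𝒜 P x w ι ψ y I)))
    (a b : Λ) : (πe ∘ y) a * (πe.comp ι) (x b) = sgn (w a * w b) • ((πe.comp ι) (x b) * (πe ∘ y) a)
      + (πe.comp ι) (P.br (x a) (x b)) := by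
  have h := hπe.map_eq_zero_of_mem (Or.inr ⟨a, b, rfl⟩)
  simpa [sub_sub, sub_eq_zero] using h

lemma comp_y_mul_comp_y [Fintype Λ]
    (hπe : IsQuotientBy k πe (idealGen k (Jgens 𝒜 P x w ι ψ y I))) (a b : Λ) :
    (πe ∘ y) a * (πe ∘ y) b = sgn (w a * w b) • ((πe ∘ y) b * (πe ∘ y) a)
      + psiF (πe.comp ι) ψ (πe ∘ y) (P.br (x a) (x b)) := by
  have h := hπe.map_eq_zero_of_mem (Or.inl (Or.inr ⟨a, b, rfl⟩))
  simpa [sub_sub, sub_eq_zero, map_psiF] using h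

end Envelope

theorem stmt9_general (k R F C A : Type) [Field k] [Ring R] [Algebra k R] [Ring F] [Algebra k F]
    [Ring C] [Algebra k C] [Ring A] [Algebra k A]
    (n : ℕ) (𝒜 : ℤ → Submodule k R) [GradedAlgebra 𝒜]
    (ℬ : ℤ → Submodule k A) [GradedAlgebra ℬ]
    (P : DGPoissonAlgebra k R 𝒜)
    (x : Fin n → R) (w : Fin n → ℤ) (hx : ∀ i, x i ∈ 𝒜 (w i))
    (hgen : Algebra.adjoin k (Set.range x) = ⊤)
    (ψ : Fin n → R →ₗ[k] R)
    (hψx : ∀ i, ψ i (x i) = 1) (hψx' : ∀ i j, i ≠ j → ψ i (x j) = 0)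
    (hψmul : ∀ (r : Fin n) ⦃i j : ℤ⦄ ⦃a b : R⦄, a ∈ 𝒜 i → b ∈ 𝒜 j →
      ψ r (a * b) = a * ψ r b + sgn (i * j) • (b * ψ r a))
    (ι : R →ₐ[k] F)
    (y : Fin n → F)
    -- the DG Poisson ideal `I` and the quotient `A = R/I`
    (I : Submodule k R)
    (π' : R →ₐ[k] A) (hπ' : IsQuotientBy k π' I)
    (hπ'mem : ∀ ⦃i : ℤ⦄ ⦃a : R⦄, a ∈ 𝒜 i → π' a ∈ ℬ i)
    (PA : DGPoissonAlgebra k A ℬ)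
    (hPAbr : ∀ r s : R, PA.br (π' r) (π' s) = π' (P.br r s))
    -- the quotient `A^e = F(R)/J`
    (πe : F →ₐ[k] C) (hπe : IsQuotientBy k πe (idealGen k (Jgens 𝒜 P x w ι ψ y I)))
    -- the structure maps `m` and `h`
    (m : A →ₐ[k] C) (hm : ∀ r : R, m (π' r) = πe (ι r))
    (h : A →ₗ[k] C) (hh : ∀ r : R, h (π' r) = πe (psiF ι ψ y r)) :
    ∀ (i : Fin n) ⦃l : ℤ⦄ ⦃f : A⦄, f ∈ ℬ l →
      (πe (y i) * m f = sgn (w i * l) • (m f * πe (y i))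
          + m (PA.br (π' (x i)) f)) ∧
      (h f * m (π' (x i)) = sgn (w i * l) • (m (π' (x i)) * h f)
          + m (PA.br f (π' (x i)))) ∧
      (πe (y i) * h f = sgn (w i * l) • (h f * πe (y i))
          + h (PA.br (π' (x i)) f)) := by
  intro i l f hf
  obtain ⟨r, hr, rfl⟩ := exists_mem_graded_map_eq hπ'.surj hπ'mem hf
  have hYx := comp_y_mul_comp_x P hπe
  have hYY := comp_y_mul_comp_y P hπe
  simp only [hm, hh, hPAbr, map_psiF]
  exact ⟨y_mul_map_eq P hx hgen hYx i hr,
    psiF_mul_map_x_eq P hx hgen hψx hψx' hψmul hYx i hr,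
    y_mul_psiF_eq P hx hgen hψx hψx' hψmul hYx hYY i hr⟩

/-- In `A^e = F(R)/J`, with `m(f + I) = f + J` and
`h(f + I) = ψ(f) + J`, for every `i` and every homogeneous `f ∈ A`:
(a) `y_i f = (-1)^{|x_i||f|} f y_i + {x_i, f}`;
(b) `h(f) x_i = (-1)^{|x_i||f|} x_i h(f) + {f, x_i}`;
(c) `y_i h(f) = (-1)^{|x_i||f|} h(f) y_i + h({x_i, f})`. -/
theorem stmt9 (k R F C A : Type) [Field k] [Ring R] [Algebra k R] [Ring F] [Algebra k F]
    [Ring C] [Algebra k C] [Ring A] [Algebra k A]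
    (n : ℕ) (𝒜 : ℤ → Submodule k R) [GradedAlgebra 𝒜]
    (ℱ : ℤ → Submodule k F) [GradedAlgebra ℱ]
    (𝒞 : ℤ → Submodule k C) [GradedAlgebra 𝒞]
    (ℬ : ℤ → Submodule k A) [GradedAlgebra ℬ]
    (P : DGPoissonAlgebra k R 𝒜)
    (x : Fin n → R) (w : Fin n → ℤ) (hx : ∀ i, x i ∈ 𝒜 (w i))
    (hgen : Algebra.adjoin k (Set.range x) = ⊤)
    (ψ : Fin n → R →ₗ[k] R)
    (hψx : ∀ i, ψ i (x i) = 1) (hψx' : ∀ i j, i ≠ j → ψ i (x j) = 0)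
    (hψmem : ∀ (r : Fin n) ⦃i : ℤ⦄ ⦃a : R⦄, a ∈ 𝒜 i → ψ r a ∈ 𝒜 (i - w r))
    (hψmul : ∀ (r : Fin n) ⦃i j : ℤ⦄ ⦃a b : R⦄, a ∈ 𝒜 i → b ∈ 𝒜 j →
      ψ r (a * b) = a * ψ r b + sgn (i * j) • (b * ψ r a))
    (ι : R →ₐ[k] F) (hι : ∀ ⦃i : ℤ⦄ ⦃a : R⦄, a ∈ 𝒜 i → ι a ∈ ℱ i)
    (y : Fin n → F) (hy : ∀ i, y i ∈ ℱ (w i))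
    -- the DG Poisson ideal `I` and the quotient `A = R/I`
    (I : Submodule k R) (hI : IsDGPoissonIdeal k 𝒜 P I)
    (π' : R →ₐ[k] A) (hπ' : IsQuotientBy k π' I)
    (hπ'mem : ∀ ⦃i : ℤ⦄ ⦃a : R⦄, a ∈ 𝒜 i → π' a ∈ ℬ i)
    (PA : DGPoissonAlgebra k A ℬ)
    (hPAd : ∀ r : R, PA.d (π' r) = π' (P.d r))
    (hPAbr : ∀ r s : R, PA.br (π' r) (π' s) = π' (P.br r s))
    -- the quotient `A^e = F(R)/J`
    (πe : F →ₐ[k] C) (hπe : IsQuotientBy k πe (idealGen k (Jgens 𝒜 P x w ι ψ y I)))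
    (hπemem : ∀ ⦃i : ℤ⦄ ⦃u : F⦄, u ∈ ℱ i → πe u ∈ 𝒞 i)
    -- the structure maps `m` and `h`
    (m : A →ₐ[k] C) (hm : ∀ r : R, m (π' r) = πe (ι r))
    (h : A →ₗ[k] C) (hh : ∀ r : R, h (π' r) = πe (psiF ι ψ y r)) :
    ∀ (i : Fin n) ⦃l : ℤ⦄ ⦃f : A⦄, f ∈ ℬ l →
      (πe (y i) * m f = sgn (w i * l) • (m f * πe (y i))
          + m (PA.br (π' (x i)) f)) ∧
      (h f * m (π' (x i)) = sgn (w i * l) • (m (π' (x i)) * h f)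
          + m (PA.br f (π' (x i)))) ∧
      (πe (y i) * h f = sgn (w i * l) • (h f * πe (y i))
          + h (PA.br (π' (x i)) f)) :=
  stmt9_general k R F C A n 𝒜 ℬ P x w hx hgen ψ hψx hψx' hψmul ι y I π' hπ' hπ'mem PA hPAbr πe hπe m
    hm h hh
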